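/- Let U ∈ ℝ^{n×n} be orthogonal, h̃(Λ) diagonal with |h̃(λ_i)| ≤ 1 + e for k indices and |h̃(λ_i)| ≤ e for the remaining n − k indices, and R ∈ ℝ^{n×d} with ‖R‖_F² ≤ (1+ε)n. Then ‖U h̃(Λ) Uᵀ R‖_F² ≤ (1+ε)·n·(k + 2ke + ne²). -/

import Mathlib

open Matrix

/-!
Cauchy–Schwarz gives `‖M R‖_F² ≤ ‖M‖_F² ‖R‖_F²`, and the Frobenius norm is invariant under
multiplication by orthogonal matrices, so `‖U h̃(Λ) Uᵀ‖_F² = ∑ h̃ᵢ² ≤ k (1 + e)² + (n - k) e²`.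
-/

namespace Matrix

variable {l m n R : Type*} [Fintype l] [Fintype m] [Fintype n] [CommSemiring R]

def frobeniusSq (A : Matrix m n R) : R := ∑ i, ∑ j, A i j ^ 2

theorem frobeniusSq_eq_trace (A : Matrix m n R) : frobeniusSq A = trace (Aᵀ * A) := by
  simp only [frobeniusSq, trace, diag, mul_apply, transpose_apply, sq]
  exact Finset.sum_comm

theorem frobeniusSq_transpose (A : Matrix m n R) : frobeniusSq Aᵀ = frobeniusSq A :=
  Finset.sum_comm

theorem frobeniusSq_orthogonal_mul [DecidableEq m] {U : Matrix l m R} (hU : Uᵀ * U = 1)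
    (A : Matrix m n R) : frobeniusSq (U * A) = frobeniusSq A := by
  rw [frobeniusSq_eq_trace, frobeniusSq_eq_trace, transpose_mul, Matrix.mul_assoc,
    ← Matrix.mul_assoc Uᵀ, hU, Matrix.one_mul]

theorem frobeniusSq_mul_transpose_orthogonal [DecidableEq n] {U : Matrix l n R} (hU : Uᵀ * U = 1)
    (A : Matrix m n R) : frobeniusSq (A * Uᵀ) = frobeniusSq A := by
  rw [← frobeniusSq_transpose, transpose_mul, transpose_transpose, frobeniusSq_orthogonal_mul hU,
    frobeniusSq_transpose]

theorem frobeniusSq_diagonal [DecidableEq m] (d : m → R) :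
    frobeniusSq (diagonal d) = ∑ i, d i ^ 2 := by
  simp [frobeniusSq, diagonal_apply, ite_pow]

theorem frobeniusSq_nonneg [LinearOrder R] [IsOrderedRing R] [ExistsAddOfLE R] (A : Matrix m n R) :
    0 ≤ frobeniusSq A :=
  Finset.sum_nonneg fun _ _ => Finset.sum_nonneg fun _ _ => sq_nonneg _

theorem frobeniusSq_mul_le [LinearOrder R] [IsStrictOrderedRing R] [ExistsAddOfLE R]
    (A : Matrix l m R) (B : Matrix m n R) :
    frobeniusSq (A * B) ≤ frobeniusSq A * frobeniusSq B := by
  calc frobeniusSq (A * B)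
      ≤ ∑ i, ∑ j, (∑ k, A i k ^ 2) * ∑ k, B k j ^ 2 :=
        Finset.sum_le_sum fun i _ => Finset.sum_le_sum fun j _ =>
          Finset.sum_mul_sq_le_sq_mul_sq _ (A i) (fun k => B k j)
    _ = frobeniusSq A * frobeniusSq B := by
        rw [frobeniusSq, Finset.sum_mul]
        refine Finset.sum_congr rfl fun i _ => ?_
        rw [← Finset.mul_sum, frobeniusSq, Finset.sum_comm]

end Matrix

theorem Finset.sum_sq_le_of_abs_le {ι R : Type*} [Fintype ι] [DecidableEq ι] [Ring R]
    [LinearOrder R] [IsStrictOrderedRing R] (K : Finset ι) {f : ι → R} {a b : R}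
    (hin : ∀ i ∈ K, |f i| ≤ a) (hout : ∀ i ∉ K, |f i| ≤ b) :
    ∑ i, f i ^ 2 ≤ K.card * a ^ 2 + Kᶜ.card * b ^ 2 := by
  have sq_le {x c : R} (h : |x| ≤ c) : x ^ 2 ≤ c ^ 2 := by
    simpa only [sq_abs] using pow_le_pow_left₀ (abs_nonneg x) h 2
  rw [← Finset.sum_add_sum_compl K]
  gcongr
  · simpa using Finset.sum_le_sum fun i hi => sq_le (hin i hi)
  · simpa using Finset.sum_le_sum fun i hi => sq_le (hout i (Finset.mem_compl.mp hi))

theorem frobenius_sq_approx_filter_le_general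
    (n k d : ℕ) (U : Matrix (Fin n) (Fin n) ℝ) (htilde : Fin n → ℝ) (e ε : ℝ)
    (K : Finset (Fin n)) (R : Matrix (Fin n) (Fin d) ℝ)
    (hU : Uᵀ * U = 1)
    (hK : K.card = k)
    (hin : ∀ i ∈ K, |htilde i| ≤ 1 + e)
    (hout : ∀ i ∉ K, |htilde i| ≤ e)
    (hR : ∑ i, ∑ j, (R i j) ^ 2 ≤ (1 + ε) * n) :
    ∑ i, ∑ j, ((U * Matrix.diagonal htilde * Uᵀ * R) i j) ^ 2
      ≤ (1 + ε) * n * ((k : ℝ) + 2 * k * e + n * e ^ 2) := by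
  have hspectrum : ∑ i, htilde i ^ 2 ≤ (k : ℝ) + 2 * k * e + n * e ^ 2 := by
    have hbound := K.sum_sq_le_of_abs_le hin hout
    rw [Finset.card_compl, Nat.cast_sub (Finset.card_le_univ K), Fintype.card_fin, hK] at hbound
    linarith
  calc frobeniusSq (U * diagonal htilde * Uᵀ * R)
      ≤ frobeniusSq (U * diagonal htilde * Uᵀ) * frobeniusSq R := frobeniusSq_mul_le _ _
    _ = (∑ i, htilde i ^ 2) * frobeniusSq R := by
        rw [frobeniusSq_mul_transpose_orthogonal hU, frobeniusSq_orthogonal_mul hU,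
          frobeniusSq_diagonal]
    _ ≤ ((k : ℝ) + 2 * k * e + n * e ^ 2) * ((1 + ε) * n) :=
        mul_le_mul hspectrum hR (frobeniusSq_nonneg R)
          ((Finset.sum_nonneg fun _ _ => sq_nonneg _).trans hspectrum)
    _ = (1 + ε) * n * ((k : ℝ) + 2 * k * e + n * e ^ 2) := by ring

/-- Let `U` be orthogonal, `h̃(Λ)` diagonal with `|h̃ i| ≤ 1 + e` on a set of `k`
indices and `|h̃ i| ≤ e` on the remaining `n − k` indices, and `R ∈ ℝ^{n×d}` with
`‖R‖_F² ≤ (1+ε)n`. Then `‖U h̃(Λ) Uᵀ R‖_F² ≤ (1+ε)·n·(k + 2ke + ne²)`. -/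
theorem frobenius_sq_approx_filter_le
    (n k d : ℕ) (U : Matrix (Fin n) (Fin n) ℝ) (htilde : Fin n → ℝ) (e ε : ℝ)
    (K : Finset (Fin n)) (R : Matrix (Fin n) (Fin d) ℝ)
    (hU : Uᵀ * U = 1) (he : 0 ≤ e) (hε : 0 ≤ ε)
    (hK : K.card = k)
    (hin : ∀ i ∈ K, |htilde i| ≤ 1 + e)
    (hout : ∀ i ∉ K, |htilde i| ≤ e)
    (hR : ∑ i, ∑ j, (R i j) ^ 2 ≤ (1 + ε) * n) :
    ∑ i, ∑ j, ((U * Matrix.diagonal htilde * Uᵀ * R) i j) ^ 2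
      ≤ (1 + ε) * n * ((k : ℝ) + 2 * k * e + n * e ^ 2) :=
  frobenius_sq_approx_filter_le_general n k d U htilde e ε K R hU hK hin hout hR
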